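/- Let F ∈ ℂ[x,y] be a binary sextic (homogeneous of degree 6) over ℂ. Then F factors as L^5·M for some linear forms L, M (homogeneous of degree 1) if and only if both transvectants (F,F)^4 and (F,F)^6 are the zero polynomial. -/

import Mathlib

open MvPolynomial

/-- Partial derivative with respect to `x` (the variable `0`). -/
noncomputable def pdx : MvPolynomial (Fin 2) ℂ → MvPolynomial (Fin 2) ℂ :=
  fun p => MvPolynomial.pderiv (0 : Fin 2) p

/-- Partial derivative with respect to `y` (the variable `1`). -/
noncomputable def pdy : MvPolynomial (Fin 2) ℂ → MvPolynomial (Fin 2) ℂ :=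
  fun p => MvPolynomial.pderiv (1 : Fin 2) p

/-- The `r`-th transvectant of binary forms `Φ₁`, `Φ₂` of degrees `q₁`, `q₂`, with the
classical symbolic-method normalization
`((q₁−r)!·(q₂−r)!)/(q₁!·q₂!) · Σ_{k=0}^{r} (−1)^k·binom(r,k)·
  (∂^rΦ₁/∂x^{r−k}∂y^k)·(∂^rΦ₂/∂x^k∂y^{r−k})`. -/
noncomputable def transvectant (q₁ q₂ r : ℕ) (Φ₁ Φ₂ : MvPolynomial (Fin 2) ℂ) :
    MvPolynomial (Fin 2) ℂ :=
  MvPolynomial.C ((((q₁ - r).factorial : ℂ) * ((q₂ - r).factorial : ℂ)) /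
      ((q₁.factorial : ℂ) * (q₂.factorial : ℂ))) *
    ∑ k ∈ Finset.range (r + 1),
      MvPolynomial.C ((-1 : ℂ) ^ k * (r.choose k : ℂ)) *
        (pdx^[r - k] (pdy^[k] Φ₁)) * (pdx^[k] (pdy^[r - k] Φ₂))

/-
Write `F = ∑ binom(6,i) aᵢ x⁶⁻ⁱ yⁱ`. Both transvectants are explicit quadratic forms in the
`aᵢ`, and `(px+qy)⁵(rx+sy)` visibly annihilates them. Conversely, when `a₀ ≠ 0` three
coefficients of `(F,F)⁴` determine `a₄, a₅, a₆` from `a₀, …, a₃`, and `(F,F)⁶` then forces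
the cusp relation `4h³ + g² = 0` for `h = a₀a₂ - a₁²`, `g = a₀²a₃ - 3a₀a₁a₂ + 2a₁³`.
Writing `h = -t²`, `g = -2t³` and `a₀c = a₁ + t` gives `F = (x + cy)⁵ (a₀x + (a₀c - 6t)y)`.
When `a₀ = 0` the same elimination runs from `a₁` (the root `y = 0` is simple or quintuple).
No square or cube roots of scalars are taken, so the algebra works over any field of
characteristic zero.
-/

section BinaryForm

variable {R : Type*} [CommSemiring R]

noncomputable def xyExp (i j : ℕ) : Fin 2 →₀ ℕ := Finsupp.single 0 i + Finsupp.single 1 j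

@[simp] theorem xyExp_apply_zero (i j : ℕ) : xyExp i j 0 = i := by simp [xyExp]

@[simp] theorem xyExp_apply_one (i j : ℕ) : xyExp i j 1 = j := by simp [xyExp]

theorem eq_xyExp (m : Fin 2 →₀ ℕ) : m = xyExp (m 0) (m 1) := by
  ext k; fin_cases k <;> simp

theorem xyExp_inj {i j k l : ℕ} : xyExp i j = xyExp k l ↔ i = k ∧ j = l := by
  refine ⟨fun h => ⟨?_, ?_⟩, fun h => by rw [h.1, h.2]⟩
  · simpa using DFunLike.congr_fun h 0
  · simpa using DFunLike.congr_fun h 1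

theorem degree_xyExp (i j : ℕ) : (xyExp i j).degree = i + j := by
  simp [xyExp, map_add]

theorem monomial_xyExp (i j : ℕ) (r : R) :
    monomial (xyExp i j) r = C r * X 0 ^ i * X 1 ^ j := by
  rw [X_pow_eq_monomial, X_pow_eq_monomial, C_mul_monomial, monomial_mul, mul_one, mul_one,
    xyExp]

noncomputable def binaryForm (n : ℕ) (c : Fin (n + 1) → R) : MvPolynomial (Fin 2) R :=
  ∑ i : Fin (n + 1), monomial (xyExp (n - i) i) (c i)

theorem coeff_binaryForm (n : ℕ) (c : Fin (n + 1) → R) (i : Fin (n + 1)) :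
    coeff (xyExp (n - i) i) (binaryForm n c) = c i := by
  rw [binaryForm, coeff_sum, Finset.sum_eq_single i]
  · simp [coeff_monomial]
  · intro j _ hji
    rw [coeff_monomial, if_neg (fun h => hji (Fin.ext (xyExp_inj.1 h).2))]
  · simp

theorem binaryForm_injective (n : ℕ) : Function.Injective (binaryForm (R := R) n) :=
  fun c d h => funext fun i => by rw [← coeff_binaryForm n c i, h, coeff_binaryForm]

theorem binaryForm_eq_zero_iff {n : ℕ} {c : Fin (n + 1) → R} : binaryForm n c = 0 ↔ c = 0 := by
  rw [← (binaryForm_injective n).eq_iff]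
  simp [binaryForm]

theorem MvPolynomial.IsHomogeneous.eq_binaryForm {F : MvPolynomial (Fin 2) R} {n : ℕ}
    (hF : F.IsHomogeneous n) : F = binaryForm n (fun i => coeff (xyExp (n - i) i) F) := by
  ext m
  rw [binaryForm, coeff_sum]
  simp_rw [coeff_monomial]
  by_cases hm : m 0 + m 1 = n
  · have hm' : xyExp (n - m 1) (m 1) = m := by rw [eq_xyExp m, xyExp_inj]; simp; omega
    rw [Finset.sum_eq_single ⟨m 1, by omega⟩]
    · simp [hm']
    · intro i _ hi
      rw [if_neg]
      rintro rfl
      exact hi (Fin.ext (by simp))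
    · simp
  · rw [hF.coeff_eq_zero (by rw [eq_xyExp m, degree_xyExp]; exact hm)]
    refine (Finset.sum_eq_zero fun i _ => if_neg ?_).symm
    rintro rfl
    simp at hm
    omega

noncomputable def sextic (a : Fin 7 → R) : MvPolynomial (Fin 2) R :=
  binaryForm 6 fun i => (Nat.choose 6 i : R) * a i

theorem MvPolynomial.IsHomogeneous.exists_eq_C_mul_X_add_C_mul_X {F : MvPolynomial (Fin 2) R}
    (hF : F.IsHomogeneous 1) : ∃ p q, F = C p * X 0 + C q * X 1 := by
  refine ⟨coeff (xyExp 1 0) F, coeff (xyExp 0 1) F, hF.eq_binaryForm.trans ?_⟩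
  simp [binaryForm, Fin.sum_univ_succ, monomial_xyExp]

end BinaryForm

theorem pdx_monomial_xyExp (i j : ℕ) (r : ℂ) :
    pdx (monomial (xyExp i j) r) = monomial (xyExp (i - 1) j) (i * r) := by
  rw [pdx, pderiv_monomial, mul_comm]
  congr 2
  · ext k; fin_cases k <;> simp
  · simp

theorem pdy_monomial_xyExp (i j : ℕ) (r : ℂ) :
    pdy (monomial (xyExp i j) r) = monomial (xyExp i (j - 1)) (j * r) := by
  rw [pdy, pderiv_monomial, mul_comm]
  congr 2
  · ext k; fin_cases k <;> simp
  · simp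

theorem pdx_iterate_monomial_xyExp (k i j : ℕ) (r : ℂ) :
    pdx^[k] (monomial (xyExp i j) r) = monomial (xyExp (i - k) j) (i.descFactorial k * r) := by
  induction k with
  | zero => simp
  | succ k ih =>
    rw [Function.iterate_succ_apply', ih, pdx_monomial_xyExp, Nat.descFactorial_succ, Nat.sub_sub]
    push_cast; ring_nf

theorem pdy_iterate_monomial_xyExp (k i j : ℕ) (r : ℂ) :
    pdy^[k] (monomial (xyExp i j) r) = monomial (xyExp i (j - k)) (j.descFactorial k * r) := by
  induction k with
  | zero => simp
  | succ k ih =>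
    rw [Function.iterate_succ_apply', ih, pdy_monomial_xyExp, Nat.descFactorial_succ, Nat.sub_sub]
    push_cast; ring_nf

theorem pdx_iterate_eq_coe_pow (k : ℕ) :
    pdx^[k] = ⇑((pderiv 0 : Derivation ℂ (MvPolynomial (Fin 2) ℂ) _).toLinearMap ^ k) := by
  rw [Module.End.coe_pow]; rfl

theorem pdy_iterate_eq_coe_pow (k : ℕ) :
    pdy^[k] = ⇑((pderiv 1 : Derivation ℂ (MvPolynomial (Fin 2) ℂ) _).toLinearMap ^ k) := by
  rw [Module.End.coe_pow]; rfl

theorem pdx_iterate_pdy_iterate_binaryForm (k l n : ℕ) (c : Fin (n + 1) → ℂ) :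
    pdx^[k] (pdy^[l] (binaryForm n c)) = ∑ i : Fin (n + 1),
      monomial (xyExp (n - i - k) (i - l))
        ((n - i).descFactorial k * (i.val.descFactorial l * c i)) := by
  rw [binaryForm, pdy_iterate_eq_coe_pow, map_sum, ← pdy_iterate_eq_coe_pow,
    pdx_iterate_eq_coe_pow, map_sum, ← pdx_iterate_eq_coe_pow]
  simp only [pdy_iterate_monomial_xyExp, pdx_iterate_monomial_xyExp]

section Algebra

variable {K : Type*} [Field K] [CharZero K]

def powFiveMulCoeffs (p q r s : K) : Fin 7 → K :=
  ![p ^ 5 * r, (5 * p ^ 4 * q * r + p ^ 5 * s) / 6, (4 * p ^ 3 * q ^ 2 * r + 2 * p ^ 4 * q * s) / 6,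
    (3 * p ^ 2 * q ^ 3 * r + 3 * p ^ 3 * q ^ 2 * s) / 6,
    (2 * p * q ^ 4 * r + 4 * p ^ 2 * q ^ 3 * s) / 6, (q ^ 5 * r + 5 * p * q ^ 4 * s) / 6, q ^ 5 * s]

def transvectantFourCoeffs (a : Fin 7 → K) : Fin 5 → K :=
  ![2 * (a 0 * a 4 - 4 * a 1 * a 3 + 3 * a 2 ^ 2),
    4 * (a 0 * a 5 - 3 * a 1 * a 4 + 2 * a 2 * a 3),
    2 * (a 0 * a 6 - 9 * a 2 * a 4 + 8 * a 3 ^ 2),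
    4 * (a 1 * a 6 - 3 * a 2 * a 5 + 2 * a 3 * a 4),
    2 * (a 2 * a 6 - 4 * a 3 * a 5 + 3 * a 4 ^ 2)]

def transvectantSixValue (a : Fin 7 → K) : K :=
  2 * (a 0 * a 6 - 6 * a 1 * a 5 + 15 * a 2 * a 4 - 10 * a 3 ^ 2)

theorem transvectantFourCoeffs_powFiveMulCoeffs (p q r s : K) :
    transvectantFourCoeffs (powFiveMulCoeffs p q r s) = 0 := by
  ext i; fin_cases i <;> simp [transvectantFourCoeffs, powFiveMulCoeffs] <;> ring

theorem transvectantSixValue_powFiveMulCoeffs (p q r s : K) :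
    transvectantSixValue (powFiveMulCoeffs p q r s) = 0 := by
  simp [transvectantSixValue, powFiveMulCoeffs]; ring

theorem transvectantFourCoeffs_eq_zero_iff (a : Fin 7 → K) :
    transvectantFourCoeffs a = 0 ↔
      a 0 * a 4 - 4 * a 1 * a 3 + 3 * a 2 ^ 2 = 0 ∧
      a 0 * a 5 - 3 * a 1 * a 4 + 2 * a 2 * a 3 = 0 ∧
      a 0 * a 6 - 9 * a 2 * a 4 + 8 * a 3 ^ 2 = 0 ∧
      a 1 * a 6 - 3 * a 2 * a 5 + 2 * a 3 * a 4 = 0 ∧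
      a 2 * a 6 - 4 * a 3 * a 5 + 3 * a 4 ^ 2 = 0 := by
  simp [transvectantFourCoeffs, funext_iff, Fin.forall_fin_succ]

theorem transvectantSixValue_eq_zero_iff (a : Fin 7 → K) :
    transvectantSixValue a = 0 ↔ a 0 * a 6 - 6 * a 1 * a 5 + 15 * a 2 * a 4 - 10 * a 3 ^ 2 = 0 := by
  simp [transvectantSixValue]

theorem eq_of_transvectantFourCoeffs_eq_zero {a b : Fin 7 → K} (ha : transvectantFourCoeffs a = 0)
    (hb : transvectantFourCoeffs b = 0) (ha₀ : a 0 ≠ 0)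
    (h₀ : a 0 = b 0) (h₁ : a 1 = b 1) (h₂ : a 2 = b 2) (h₃ : a 3 = b 3) : a = b := by
  obtain ⟨ea₄, ea₅, ea₆, -, -⟩ := (transvectantFourCoeffs_eq_zero_iff a).1 ha
  obtain ⟨eb₄, eb₅, eb₆, -, -⟩ := (transvectantFourCoeffs_eq_zero_iff b).1 hb
  simp only [h₀, h₁, h₂, h₃] at ea₄ ea₅ ea₆
  rw [h₀] at ha₀
  have h₄ : a 4 = b 4 := mul_left_cancel₀ ha₀ (by linear_combination ea₄ - eb₄)
  have h₅ : a 5 = b 5 := mul_left_cancel₀ ha₀ (by linear_combination ea₅ - eb₅ + 3 * b 1 * h₄)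
  have h₆ : a 6 = b 6 := mul_left_cancel₀ ha₀ (by linear_combination ea₆ - eb₆ + 9 * b 2 * h₄)
  ext i; fin_cases i
  exacts [h₀, h₁, h₂, h₃, h₄, h₅, h₆]

theorem eq_of_transvectantCoeffs_eq_zero_of_apply_zero_eq_zero {a b : Fin 7 → K}
    (ha : transvectantFourCoeffs a = 0 ∧ transvectantSixValue a = 0)
    (hb : transvectantFourCoeffs b = 0 ∧ transvectantSixValue b = 0)
    (ha₁ : a 1 ≠ 0) (h₀ : a 0 = 0) (hb₀ : b 0 = 0) (h₁ : a 1 = b 1) (h₂ : a 2 = b 2) :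
    a = b := by
  obtain ⟨⟨ea₃, ea₄, -, ea₆, -⟩, ea₅⟩ :=
    And.imp (transvectantFourCoeffs_eq_zero_iff a).1 (transvectantSixValue_eq_zero_iff a).1 ha
  obtain ⟨⟨eb₃, eb₄, -, eb₆, -⟩, eb₅⟩ :=
    And.imp (transvectantFourCoeffs_eq_zero_iff b).1 (transvectantSixValue_eq_zero_iff b).1 hb
  simp only [h₀, h₁, h₂] at ea₃ ea₄ ea₅ ea₆
  simp only [hb₀] at eb₃ eb₄ eb₅ eb₆
  rw [h₁] at ha₁
  have h₃ : a 3 = b 3 := mul_left_cancel₀ ha₁ (by linear_combination (eb₃ - ea₃) / 4)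
  have h₄ : a 4 = b 4 := mul_left_cancel₀ ha₁
    (by linear_combination (eb₄ - ea₄ + 2 * b 2 * h₃) / 3)
  have h₅ : a 5 = b 5 := mul_left_cancel₀ ha₁
    (by linear_combination (eb₅ - ea₅ + 15 * b 2 * h₄ - 10 * (a 3 + b 3) * h₃) / 6)
  have h₆ : a 6 = b 6 := mul_left_cancel₀ ha₁
    (by linear_combination ea₆ - eb₆ + 3 * b 2 * h₅ - 2 * (a 3 * h₄ + b 4 * h₃))
  ext i; fin_cases i
  exacts [h₀.trans hb₀.symm, h₁, h₂, h₃, h₄, h₅, h₆]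

theorem exists_eq_neg_sq_and_eq_neg_two_mul_pow_three {h g : K} (hhg : 4 * h ^ 3 + g ^ 2 = 0) :
    ∃ t, h = -t ^ 2 ∧ g = -2 * t ^ 3 := by
  rcases eq_or_ne h 0 with rfl | hh
  · exact ⟨0, by simp, by simpa using hhg⟩
  · refine ⟨g / (2 * h), ?_, ?_⟩
    · field_simp
      linear_combination hhg
    · field_simp
      linear_combination g * hhg

theorem exists_powFiveMulCoeffs_of_apply_zero_ne_zero {a : Fin 7 → K}
    (ha : transvectantFourCoeffs a = 0 ∧ transvectantSixValue a = 0) (ha₀ : a 0 ≠ 0) :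
    ∃ c t, a = powFiveMulCoeffs 1 c (a 0) (a 0 * c - 6 * t) := by
  obtain ⟨⟨e₄, e₅, e₆, -, -⟩, e⟩ :=
    And.imp (transvectantFourCoeffs_eq_zero_iff a).1 (transvectantSixValue_eq_zero_iff a).1 ha
  have cusp : 4 * (a 0 * a 2 - a 1 ^ 2) ^ 3 +
      (a 0 ^ 2 * a 3 - 3 * a 0 * a 1 * a 2 + 2 * a 1 ^ 3) ^ 2 = 0 := by
    linear_combination (a 0 ^ 2 / 3) *
      (a 0 ^ 2 * (e₆ - e) / 6 - a 0 * a 1 * e₅ + (4 * a 0 * a 2 - 3 * a 1 ^ 2) * e₄)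
  obtain ⟨t, ht₂, ht₃⟩ := exists_eq_neg_sq_and_eq_neg_two_mul_pow_three cusp
  obtain ⟨c, hc⟩ : ∃ c, a 0 * c = a 1 + t := ⟨_, mul_div_cancel₀ _ ha₀⟩
  have h₁ : a 1 = a 0 * c - t := by linear_combination -hc
  rw [h₁] at ht₂ ht₃
  have h₂ : a 2 = a 0 * c ^ 2 - 2 * c * t :=
    mul_left_cancel₀ ha₀ (by linear_combination ht₂)
  have h₃ : a 3 = a 0 * c ^ 3 - 3 * c ^ 2 * t :=
    mul_left_cancel₀ (pow_ne_zero 2 ha₀)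
      (by linear_combination ht₃ + 3 * a 0 * (a 0 * c - t) * h₂)
  refine ⟨c, t, eq_of_transvectantFourCoeffs_eq_zero ha.1
    (transvectantFourCoeffs_powFiveMulCoeffs _ _ _ _) ha₀ ?_ ?_ ?_ ?_⟩ <;>
    simp [powFiveMulCoeffs]
  · linear_combination h₁
  · linear_combination h₂
  · linear_combination h₃

theorem eq_powFiveMulCoeffs_of_apply_zero_eq_zero_of_apply_one_eq_zero {a : Fin 7 → K}
    (ha : transvectantFourCoeffs a = 0) (ha₀ : a 0 = 0) (ha₁ : a 1 = 0) :
    a = powFiveMulCoeffs 0 1 (6 * a 5) (a 6) := by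
  obtain ⟨e₄, -, e₆, -, e₈⟩ := (transvectantFourCoeffs_eq_zero_iff a).1 ha
  have h₂ : a 2 = 0 := pow_eq_zero_iff (n := 2) (by norm_num) |>.1
    (by linear_combination (e₄ - a 4 * ha₀ + 4 * a 3 * ha₁) / 3)
  have h₃ : a 3 = 0 := pow_eq_zero_iff (n := 2) (by norm_num) |>.1
    (by linear_combination (e₆ - a 6 * ha₀ + 9 * a 4 * h₂) / 8)
  have h₄ : a 4 = 0 := pow_eq_zero_iff (n := 2) (by norm_num) |>.1
    (by linear_combination (e₈ - a 6 * h₂ + 4 * a 5 * h₃) / 3)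
  ext i; fin_cases i <;> simp [powFiveMulCoeffs, *]

theorem exists_eq_powFiveMulCoeffs_iff (a : Fin 7 → K) :
    (∃ p q r s, a = powFiveMulCoeffs p q r s) ↔
      transvectantFourCoeffs a = 0 ∧ transvectantSixValue a = 0 := by
  constructor
  · rintro ⟨p, q, r, s, rfl⟩
    exact ⟨transvectantFourCoeffs_powFiveMulCoeffs p q r s,
      transvectantSixValue_powFiveMulCoeffs p q r s⟩
  intro ha
  rcases ne_or_eq (a 0) 0 with ha₀ | ha₀
  · obtain ⟨c, t, h⟩ := exists_powFiveMulCoeffs_of_apply_zero_ne_zero ha ha₀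
    exact ⟨_, _, _, _, h⟩
  rcases ne_or_eq (a 1) 0 with ha₁ | ha₁
  · refine ⟨1, a 2 / (2 * a 1), 0, 6 * a 1,
      eq_of_transvectantCoeffs_eq_zero_of_apply_zero_eq_zero ha
        ⟨transvectantFourCoeffs_powFiveMulCoeffs _ _ _ _,
          transvectantSixValue_powFiveMulCoeffs _ _ _ _⟩ ha₁ ha₀ ?_ ?_ ?_⟩ <;>
      simp [powFiveMulCoeffs]
    field_simp
  · exact ⟨_, _, _, _,
      eq_powFiveMulCoeffs_of_apply_zero_eq_zero_of_apply_one_eq_zero ha.1 ha₀ ha₁⟩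

theorem sextic_injective : Function.Injective (sextic (R := K)) := fun _ _ h => funext fun i =>
  mul_left_cancel₀ (Nat.cast_ne_zero.2 (Nat.choose_pos (Nat.le_of_lt_succ i.2)).ne')
    (congrFun (binaryForm_injective 6 h) i)

theorem MvPolynomial.IsHomogeneous.exists_eq_sextic {F : MvPolynomial (Fin 2) K}
    (hF : F.IsHomogeneous 6) : ∃ a, F = sextic a := by
  refine ⟨fun i => coeff (xyExp (6 - i) i) F / Nat.choose 6 i, hF.eq_binaryForm.trans ?_⟩
  congr 1
  funext i
  rw [mul_div_cancel₀ _ (Nat.cast_ne_zero.2 (Nat.choose_pos (Nat.le_of_lt_succ i.2)).ne')]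

theorem linear_pow_five_mul_linear_eq_sextic (p q r s : K) :
    (C p * X 0 + C q * X 1) ^ 5 * (C r * X 0 + C s * X 1) =
      sextic (powFiveMulCoeffs p q r s) := by
  have hc : (fun i : Fin 7 => (Nat.choose 6 i : K) * powFiveMulCoeffs p q r s i) =
      ![p ^ 5 * r, 5 * p ^ 4 * q * r + p ^ 5 * s, 10 * p ^ 3 * q ^ 2 * r + 5 * p ^ 4 * q * s,
        10 * p ^ 2 * q ^ 3 * r + 10 * p ^ 3 * q ^ 2 * s, 5 * p * q ^ 4 * r + 10 * p ^ 2 * q ^ 3 * s,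
        q ^ 5 * r + 5 * p * q ^ 4 * s, q ^ 5 * s] := by
    funext i; fin_cases i <;> simp [powFiveMulCoeffs, Nat.choose] <;> ring
  rw [sextic, hc]
  simp [binaryForm, Fin.sum_univ_succ, monomial_xyExp]
  simp only [map_ofNat]
  ring

end Algebra

theorem transvectant_four_sextic (a : Fin 7 → ℂ) :
    transvectant 6 6 4 (sextic a) (sextic a) = binaryForm 4 (transvectantFourCoeffs a) := by
  -- 129600 = (6!)² / (2!)² clears the normalizing factor of the transvectant
  refine mul_left_cancel₀ (C_ne_zero.2 (by norm_num : (129600 : ℂ) ≠ 0)) ?_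
  rw [transvectant, ← mul_assoc, ← C_mul]
  norm_num [Nat.factorial]
  simp only [sextic, pdx_iterate_pdy_iterate_binaryForm]
  simp only [binaryForm, Finset.sum_range_succ, Finset.sum_range_zero, Fin.sum_univ_succ,
    Fin.sum_univ_zero]
  simp [transvectantFourCoeffs, monomial_xyExp, Nat.descFactorial, Nat.choose]
  simp only [map_ofNat]
  ring

theorem transvectant_six_sextic (a : Fin 7 → ℂ) :
    transvectant 6 6 6 (sextic a) (sextic a) = C (transvectantSixValue a) := by
  -- 518400 = (6!)²
  refine mul_left_cancel₀ (C_ne_zero.2 (by norm_num : (518400 : ℂ) ≠ 0)) ?_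
  rw [transvectant, ← mul_assoc, ← C_mul]
  norm_num [Nat.factorial]
  simp only [sextic, pdx_iterate_pdy_iterate_binaryForm]
  simp only [Finset.sum_range_succ, Finset.sum_range_zero, Fin.sum_univ_succ, Fin.sum_univ_zero]
  simp [transvectantSixValue, monomial_xyExp, Nat.descFactorial, Nat.choose]
  simp only [map_ofNat]
  ring

/-- A binary sextic `F` is of the form `L⁵M` iff the covariants `(F,F)⁴` and `(F,F)⁶`
vanish. -/
theorem sextic_quintupleRoot_iff (F : MvPolynomial (Fin 2) ℂ)
    (hF : F.IsHomogeneous 6) :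
    (∃ L M : MvPolynomial (Fin 2) ℂ, L.IsHomogeneous 1 ∧ M.IsHomogeneous 1 ∧
        F = L ^ 5 * M) ↔
      (transvectant 6 6 4 F F = 0 ∧ transvectant 6 6 6 F F = 0) := by
  obtain ⟨a, rfl⟩ := hF.exists_eq_sextic
  rw [transvectant_four_sextic, transvectant_six_sextic, binaryForm_eq_zero_iff, C_eq_zero,
    ← exists_eq_powFiveMulCoeffs_iff]
  constructor
  · rintro ⟨L, M, hL, hM, h⟩
    obtain ⟨p, q, rfl⟩ := hL.exists_eq_C_mul_X_add_C_mul_X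
    obtain ⟨r, s, rfl⟩ := hM.exists_eq_C_mul_X_add_C_mul_X
    rw [linear_pow_five_mul_linear_eq_sextic] at h
    exact ⟨p, q, r, s, sextic_injective h⟩
  · rintro ⟨p, q, r, s, rfl⟩
    refine ⟨_, _, ?_, ?_, (linear_pow_five_mul_linear_eq_sextic p q r s).symm⟩ <;>
      exact ((isHomogeneous_C_mul_X _ 0).add (isHomogeneous_C_mul_X _ 1))
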